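/- Let E be a topological graph with no singular vertices such that V_n is closed in E^0 for every n ≥ 1. Then Iso(Γ(E^∞,σ))° is closed in Γ(E^∞,σ). -/

import Mathlib

/-- A topological graph: vertex space `V`, edge space `E`, continuous range map `r`
and locally homeomorphic source map `s`. -/
structure TopGraph (V E : Type) [TopologicalSpace V] [TopologicalSpace E] where
  r : E → V
  s : E → V
  r_cont : Continuous r
  s_locHomeo : IsLocalHomeomorph s

namespace TopGraph

variable {V E : Type} [TopologicalSpace V] [TopologicalSpace E] (G : TopGraph V E)

/-- The predicate that `μ : Fin n → E` is a (finite) path. -/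
def IsPathFn {n : ℕ} (μ : Fin n → E) : Prop :=
  ∀ (i : ℕ) (h : i + 1 < n), G.s (μ ⟨i, Nat.lt_of_succ_lt h⟩) = G.r (μ ⟨i + 1, h⟩)

/-- The space `E^n` of paths of length `n`, with the subspace topology of the product. -/
def Path (n : ℕ) : Type := {μ : Fin n → E // G.IsPathFn μ}

instance (n : ℕ) : TopologicalSpace (G.Path n) :=
  inferInstanceAs (TopologicalSpace {μ : Fin n → E // G.IsPathFn μ})

/-- `r^n(μ) = r(μ₁)`. -/
def pathRange {n : ℕ} (hn : 0 < n) (μ : G.Path n) : V := G.r (μ.1 ⟨0, hn⟩)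

/-- `s^n(μ) = s(μₙ)`. -/
def pathSource {n : ℕ} (hn : 0 < n) (μ : G.Path n) : V :=
  G.s (μ.1 ⟨n - 1, Nat.sub_lt hn Nat.one_pos⟩)

/-- A cycle is a path whose range equals its source; its base point is its range. -/
def IsCycle {n : ℕ} (hn : 0 < n) (μ : G.Path n) : Prop :=
  G.pathRange hn μ = G.pathSource hn μ

/-- A path `μ ∈ E^n` has an entrance if some edge `e ≠ μᵢ` has `r(e) = r(μᵢ)`. -/
def HasEntrance {n : ℕ} (μ : G.Path n) : Prop :=
  ∃ (i : Fin n) (e : E), G.r e = G.r (μ.1 i) ∧ e ≠ μ.1 i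

theorem block_lt {n k : ℕ} (j : Fin k) (i : Fin n) : (j : ℕ) * n + (i : ℕ) < k * n := by
  have hi := i.2
  have hj := j.2
  calc (j : ℕ) * n + (i : ℕ) < ((j : ℕ) + 1) * n := by rw [Nat.add_mul, Nat.one_mul]; omega
    _ ≤ k * n := Nat.mul_le_mul (Nat.succ_le_of_lt hj) le_rfl

/-- The `j`-th block of length `n` of a path of length `k * n`. -/
def block {n k : ℕ} (α : G.Path (k * n)) (j : Fin k) : G.Path n :=
  ⟨fun i => α.1 ⟨(j : ℕ) * n + (i : ℕ), block_lt j i⟩,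
    fun i h => α.2 ((j : ℕ) * n + i) (block_lt j ⟨i + 1, h⟩)⟩

/-- `α ∈ kN` : every block of `α` lies in `N`. -/
def BlocksIn {n k : ℕ} (N : Set (G.Path n)) (α : G.Path (k * n)) : Prop :=
  ∀ j : Fin k, G.block α j ∈ N

/-- The set `B^n` of cycles of length `n` admitting `k ≥ 1` and an open neighbourhood `N`
satisfying conditions (1) and (2) of Notation 3.3. -/
def B (n : ℕ) (hn : 0 < n) : Set (G.Path n) :=
  {μ | G.IsCycle hn μ ∧
    ∃ (k : ℕ) (hk : 0 < k) (N : Set (G.Path n)), IsOpen N ∧ μ ∈ N ∧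
      (∀ α β : G.Path (k * n), G.BlocksIn N α → G.BlocksIn N β → α ≠ β →
        ¬ ∃ γ ∈ N, G.pathRange hn γ = G.pathSource (Nat.mul_pos hk hn) α ∧
          G.pathSource hn γ = G.pathSource (Nat.mul_pos hk hn) β) ∧
      (∀ α : G.Path (k * n), G.BlocksIn N α →
        ¬ ∃ γ ∈ N, G.IsCycle hn γ ∧ G.HasEntrance γ ∧
          G.pathRange hn γ = G.pathSource (Nat.mul_pos hk hn) α)}

/-- The infinite path space `E^∞`, with the subspace topology of the product. -/
def InfPath : Type := {x : ℕ → E // ∀ i : ℕ, G.s (x i) = G.r (x (i + 1))}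

instance : TopologicalSpace G.InfPath :=
  inferInstanceAs (TopologicalSpace {x : ℕ → E // ∀ i : ℕ, G.s (x i) = G.r (x (i + 1))})

/-- The one-sided shift on `E^∞`. -/
def shift (x : G.InfPath) : G.InfPath := ⟨fun i => x.1 (i + 1), fun i => x.2 (i + 1)⟩

/-- The segment `x_{a+1} ⋯ x_{a+len}` (0-indexed: edges `a, …, a+len-1`) of an infinite path. -/
def segment (x : G.InfPath) (a len : ℕ) : G.Path len :=
  ⟨fun i => x.1 (a + (i : ℕ)), fun i _ => x.2 (a + i)⟩

/-- The boundary path groupoid `Γ(E^∞, σ)` as a set. -/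
def Gamma : Type :=
  {g : G.InfPath × ℤ × G.InfPath //
    ∃ k l : ℕ, g.2.1 = (k : ℤ) - (l : ℤ) ∧ G.shift^[k] g.1 = G.shift^[l] g.2.2}

/-- Basic sets `U(U, W, k, l)` for the topology of `Γ(E^∞, σ)`. -/
def basicSet (U W : Set G.InfPath) (k l : ℕ) : Set G.Gamma :=
  {g | g.1.1 ∈ U ∧ g.1.2.2 ∈ W ∧ g.1.2.1 = (k : ℤ) - (l : ℤ) ∧
    G.shift^[k] g.1.1 = G.shift^[l] g.1.2.2}

/-- The topology on `Γ(E^∞, σ)` generated by the sets `U(U, W, k, l)` with `U, W` open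
and `σ^k`, `σ^l` injective on `U` resp. `W`. -/
instance : TopologicalSpace G.Gamma :=
  TopologicalSpace.generateFrom
    {S | ∃ (U W : Set G.InfPath) (k l : ℕ), IsOpen U ∧ IsOpen W ∧
      Set.InjOn (G.shift^[k]) U ∧ Set.InjOn (G.shift^[l]) W ∧ S = G.basicSet U W k l}

/-- The isotropy group bundle `Iso(Γ(E^∞, σ))`. -/
def isoSet : Set G.Gamma := {g | g.1.1 = g.1.2.2}

/-- The interior of the isotropy group bundle. -/
def isoInterior : Set G.Gamma := interior G.isoSet

/-- The set `E^0_fin` of finite receivers. -/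
def finRecv : Set V := {v | ∃ N : Set V, IsOpen N ∧ v ∈ N ∧ IsCompact (G.r ⁻¹' closure N)}

/-- The set `E^0_sce` of sources. -/
def sce : Set V := (closure (Set.range G.r))ᶜ

/-- The set `E^0_rg` of regular vertices. -/
def rg : Set V := G.finRecv \ closure G.sce

/-- The set `E^0_sg` of singular vertices. -/
def sg : Set V := G.rgᶜ

/-- The set `V_n` of vertices having an open neighbourhood consisting of base points of
cycles without entrances in `E^n`. -/
def Vset (n : ℕ) (hn : 0 < n) : Set V :=
  {v | ∃ W : Set V, IsOpen W ∧ v ∈ W ∧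
    ∀ w ∈ W, ∃ γ : G.Path n, G.IsCycle hn γ ∧ ¬ G.HasEntrance γ ∧ G.pathRange hn γ = w}

/-- `E` is topologically free if the set of base points of cycles without entrances has
empty interior. -/
def TopologicallyFree : Prop :=
  interior {v : V | ∃ (n : ℕ) (hn : 0 < n) (γ : G.Path n),
    G.IsCycle hn γ ∧ ¬ G.HasEntrance γ ∧ G.pathRange hn γ = v} = ∅

/-- The groupoid `Γ(E^∞, σ)` is essentially free if the set of units with trivial
isotropy is dense. -/
def EssentiallyFree : Prop :=
  Dense {x : G.InfPath | ∀ g : G.Gamma, g.1.1 = x → g.1.2.2 = x → g.1.2.1 = 0}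

end TopGraph

/-!
Off the diagonal the isotropy bundle is closed because `E^∞` is Hausdorff, every `(x, 0, x)`
lies in the open set `U(E^∞, E^∞, 0, 0) ⊆ Iso`, and inversion turns negative lag into positive
lag. So let `g = (x, n, x) ∉ Iso°` with `n > 0` and `σ^(l+n) x = σ^l x`.

If `r(x_l) ∈ V_n`, every path near `x` whose `l`-th edge has range near `r(x_l)` runs around an
entrance-free cycle from there on, so it is `n`-periodic after `l`, and `U(U, U, l+n, l)` is an
open set of isotropy around `g`. Hence `r(x_l) ∉ V_n`, and as `V_n` is closed, this persists on a
basic neighbourhood `U(U, W, l+n, l)` of `g`.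

Conversely, let `h = (y, n, y) ∈ Iso°` with `σ^(l+n) y = σ^l y`. Injectivity on a basic set inside
`Iso` forces every path sharing a long prefix with `y` to be `n`-periodic after `l`. Without
singular vertices every vertex receives an edge and `s` is open, so such prefixes reach every vertex
near `r(y_b)` and can be rerouted through any competing edge; hence `r(y_b) ∈ V_n` for all large
`b`, and by periodicity `r(y_l) ∈ V_n`.
-/

open Set Filter Function Topology TopologicalSpace

namespace TopGraph

variable {V E : Type} [TopologicalSpace V] [TopologicalSpace E] (G : TopGraph V E)

section InfPath

instance [T2Space E] : T2Space G.InfPath :=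
  inferInstanceAs (T2Space {x : ℕ → E // ∀ i : ℕ, G.s (x i) = G.r (x (i + 1))})

lemma infPath_ext {x y : G.InfPath} (h : ∀ i, x.1 i = y.1 i) : x = y :=
  Subtype.ext (funext h)

lemma shift_iterate_coord (x : G.InfPath) (k i : ℕ) : (G.shift^[k] x).1 i = x.1 (i + k) := by
  induction k generalizing x with
  | zero => rfl
  | succ k ih =>
    rw [iterate_succ_apply, ih]
    exact congrArg x.1 (by omega)

lemma shift_iterate_eq_iff {x y : G.InfPath} {k l : ℕ} :
    G.shift^[k] x = G.shift^[l] y ↔ ∀ i, x.1 (i + k) = y.1 (i + l) := by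
  refine ⟨fun h i => ?_, fun h => G.infPath_ext fun i => ?_⟩
  · rw [← G.shift_iterate_coord x k i, ← G.shift_iterate_coord y l i, h]
  · rw [G.shift_iterate_coord, G.shift_iterate_coord, h i]

lemma continuous_coord (i : ℕ) : Continuous fun z : G.InfPath => z.1 i :=
  (continuous_apply i).comp continuous_subtype_val

lemma continuous_shift : Continuous G.shift :=
  Continuous.subtype_mk (continuous_pi fun i => G.continuous_coord (i + 1)) _

lemma injOn_shift {S : Set E} (hS : InjOn G.s S) : InjOn G.shift {z | z.1 0 ∈ S} := by
  intro z hz z' hz' h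
  have h0 : z.1 0 = z'.1 0 := hS hz hz' <| by
    rw [z.2, z'.2]
    exact congrArg (fun w : G.InfPath => G.r (w.1 0)) h
  exact G.infPath_ext fun i => by
    cases i with
    | zero => exact h0
    | succ i => exact congrArg (·.1 i) h

lemma exists_isOpen_injOn_shift_iterate (x : G.InfPath) (k : ℕ) :
    ∃ U : Set G.InfPath, IsOpen U ∧ x ∈ U ∧ InjOn (G.shift^[k]) U := by
  induction k generalizing x with
  | zero => exact ⟨univ, isOpen_univ, trivial, injective_id.injOn⟩
  | succ k ih =>
    obtain ⟨U, hU, hxU, hinj⟩ := ih (G.shift x)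
    obtain ⟨S, hS, hxS, hSinj⟩ := G.s_locHomeo.isLocallyInjective (x.1 0)
    refine ⟨G.shift ⁻¹' U ∩ {z | z.1 0 ∈ S},
      (hU.preimage G.continuous_shift).inter (hS.preimage (G.continuous_coord 0)), ⟨hxU, hxS⟩, ?_⟩
    rw [iterate_succ]
    exact hinj.comp ((G.injOn_shift hSinj).mono inter_subset_right) fun z hz => hz.1

def cyl (O : ℕ → Set E) (m : ℕ) : Set G.InfPath := {z | ∀ i < m, z.1 i ∈ O i}

lemma exists_cyl_subset_of_mem_nhds {y : G.InfPath} {N : Set G.InfPath} (hN : N ∈ 𝓝 y) :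
    ∃ (O : ℕ → Set E) (M : ℕ), (∀ i, O i ∈ 𝓝 (y.1 i)) ∧ G.cyl O M ⊆ N := by
  obtain ⟨T, hT, hTN⟩ := (mem_nhds_subtype _ y N).1 hN
  rw [nhds_pi, Filter.mem_pi'] at hT
  obtain ⟨I, O, hO, hIT⟩ := hT
  exact ⟨O, I.sup id + 1, hO, fun z hz =>
    hTN (hIT fun i hi => hz i (Nat.lt_succ_of_le (Finset.le_sup (f := id) hi)))⟩

def splice (a : G.InfPath) (m : ℕ) (b : G.InfPath) (h : G.r (a.1 m) = G.r (b.1 0)) :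
    G.InfPath :=
  ⟨fun i => if i < m then a.1 i else b.1 (i - m), fun i => by
    dsimp only
    by_cases h₁ : i + 1 < m
    · rw [if_pos (by omega), if_pos h₁]
      exact a.2 i
    · by_cases h₂ : i < m
      · rw [if_pos h₂, if_neg h₁, a.2 i, show i + 1 = m by omega, show m - m = 0 by omega]
        exact h
      · rw [if_neg h₂, if_neg h₁, b.2, show i - m + 1 = i + 1 - m by omega]⟩

variable {G} {a b : G.InfPath} {m : ℕ} {h : G.r (a.1 m) = G.r (b.1 0)}

lemma splice_coord_of_lt {i : ℕ} (hi : i < m) : (G.splice a m b h).1 i = a.1 i :=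
  if_pos hi

lemma splice_coord_add (i : ℕ) : (G.splice a m b h).1 (i + m) = b.1 i := by
  simp [splice]

lemma shift_iterate_splice : G.shift^[m] (G.splice a m b h) = b :=
  G.infPath_ext fun i => by rw [shift_iterate_coord, splice_coord_add]

end InfPath

section Periodic

variable {G} {z : G.InfPath} {l n : ℕ}

lemma coord_add_eq_of_shift_iterate (hz : G.shift^[l + n] z = G.shift^[l] z) {i : ℕ}
    (hi : l ≤ i) : z.1 (i + n) = z.1 i := by
  have := G.shift_iterate_eq_iff.1 hz (i - l)
  rwa [show i - l + (l + n) = i + n by omega, show i - l + l = i by omega] at this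

lemma coord_add_mul_eq_of_shift_iterate (hz : G.shift^[l + n] z = G.shift^[l] z) {i : ℕ}
    (hi : l ≤ i) (k : ℕ) : z.1 (i + n * k) = z.1 i := by
  induction k with
  | zero => rfl
  | succ k ih => rw [Nat.mul_succ, ← Nat.add_assoc, coord_add_eq_of_shift_iterate hz (by omega), ih]

lemma IsCycle.s_eq_r_mod {hn : 0 < n} {γ : G.Path n} (hγ : G.IsCycle hn γ) (i : ℕ) :
    G.s (γ.1 ⟨i % n, Nat.mod_lt i hn⟩) = G.r (γ.1 ⟨(i + 1) % n, Nat.mod_lt _ hn⟩) := by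
  have hmod : (i + 1) % n = (i % n + 1) % n := (Nat.mod_add_mod i n 1).symm
  have hi := Nat.mod_lt i hn
  by_cases h : i % n + 1 < n
  · simp only [hmod, Nat.mod_eq_of_lt h]
    exact γ.2 _ h
  · have hlast : i % n = n - 1 := by omega
    simp only [hmod, show i % n + 1 = n by omega, Nat.mod_self]
    simp only [hlast]
    exact hγ.symm

lemma shift_iterate_eq_self_of_not_hasEntrance {hn : 0 < n} {γ : G.Path n}
    (hγ : G.IsCycle hn γ) (hent : ¬ G.HasEntrance γ) (hz : G.r (z.1 0) = G.pathRange hn γ) :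
    G.shift^[n] z = z := by
  have hedge : ∀ (j : Fin n) (e : E), G.r e = G.r (γ.1 j) → e = γ.1 j :=
    fun j e he => by_contra fun hne => hent ⟨j, e, he, hne⟩
  have hcoord : ∀ i, z.1 i = γ.1 ⟨i % n, Nat.mod_lt i hn⟩ := by
    intro i
    induction i with
    | zero => exact hedge _ _ (by simpa [pathRange] using hz)
    | succ i ih => exact hedge _ _ (by rw [← z.2 i, ih, hγ.s_eq_r_mod])
  refine G.infPath_ext fun i => ?_
  rw [shift_iterate_coord, hcoord, hcoord]
  simp only [Nat.add_mod_right]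

lemma isCycle_segment (hn : 0 < n) (hz : G.shift^[l + n] z = G.shift^[l] z) {b : ℕ}
    (hb : l ≤ b) : G.IsCycle hn (G.segment z b n) := by
  show G.r (z.1 b) = G.s (z.1 (b + (n - 1)))
  rw [z.2, show b + (n - 1) + 1 = b + n by omega, coord_add_eq_of_shift_iterate hz hb]

end Periodic

section NoSingularVertices

lemma surjective_r [T2Space V] (hsg : G.sg = ∅) : Surjective G.r := by
  intro v
  have hv : v ∈ G.rg := by
    have : v ∉ G.sg := hsg ▸ notMem_empty v
    simpa [sg] using this
  obtain ⟨⟨N, hN, hvN, hK⟩, hvsce⟩ := hv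
  have hvcl : v ∈ closure (range G.r) :=
    not_not.1 fun h => hvsce (subset_closure (s := G.sce) h)
  by_contra hvr
  -- `N` minus the compact set `r(r⁻¹(closure N))` is a neighbourhood of `v` avoiding `range r`.
  have hvK : v ∉ G.r '' (G.r ⁻¹' closure N) := fun ⟨e, _, he⟩ => hvr ⟨e, he⟩
  obtain ⟨_, ⟨hwN, hwK⟩, e, rfl⟩ :=
    mem_closure_iff.1 hvcl _ (hN.inter (hK.image G.r_cont).isClosed.isOpen_compl) ⟨hvN, hvK⟩
  exact hwK ⟨e, subset_closure hwN, rfl⟩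

lemma exists_infPath_head (hr : Surjective G.r) (e : E) : ∃ z : G.InfPath, z.1 0 = e :=
  ⟨⟨fun i => Nat.rec e (fun _ d => surjInv hr (G.s d)) i, fun _ => (surjInv_eq hr _).symm⟩, rfl⟩

lemma image_cyl_mem_nhds (hr : Surjective G.r) (y : G.InfPath) (O : ℕ → Set E) (m : ℕ)
    (hO : ∀ i < m, O i ∈ 𝓝 (y.1 i)) :
    (fun z : G.InfPath => G.r (z.1 m)) '' G.cyl O m ∈ 𝓝 (G.r (y.1 m)) := by
  induction m with
  | zero =>
    refine univ_mem' fun v => ?_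
    obtain ⟨e, rfl⟩ := hr v
    obtain ⟨z, rfl⟩ := G.exists_infPath_head hr e
    exact ⟨z, fun i hi => absurd hi (Nat.not_lt_zero i), rfl⟩
  | succ m ih =>
    have hlift := G.s_locHomeo.isOpenMap.image_mem_nhds (inter_mem (hO m (by omega))
      (G.r_cont.continuousAt.preimage_mem_nhds (ih fun i hi => hO i (by omega))))
    rw [y.2 m] at hlift
    refine mem_of_superset hlift ?_
    rintro _ ⟨e, ⟨heO, z, hz, hze⟩, rfl⟩
    obtain ⟨p, rfl⟩ := G.exists_infPath_head hr e
    refine ⟨G.splice z m p hze, fun i hi => ?_, ?_⟩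
    · rcases Nat.lt_succ_iff_lt_or_eq.1 hi with hi | hi
      · rw [splice_coord_of_lt hi]
        exact hz i hi
      · rw [show i = 0 + m by omega, splice_coord_add]
        simpa using heO
    · show G.r ((G.splice z m p hze).1 (m + 1)) = G.s (p.1 0)
      rw [add_comm, splice_coord_add, p.2]

lemma not_hasEntrance_segment (hr : Surjective G.r) {z : G.InfPath} {l n b : ℕ} (hb : l + n ≤ b)
    (h : ∀ z' : G.InfPath, (∀ i < b, z'.1 i = z.1 i) → G.shift^[l + n] z' = G.shift^[l] z') :
    ¬ G.HasEntrance (G.segment z b n) := by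
  rintro ⟨i, e, hre, hne⟩
  obtain ⟨p, hp⟩ := G.exists_infPath_head hr e
  have hjoin : G.r (z.1 (b + i)) = G.r (p.1 0) := hp ▸ hre.symm
  have hz' := h (G.splice z (b + i) p hjoin) fun j hj => splice_coord_of_lt (by omega)
  apply hne
  calc e = (G.splice z (b + i) p hjoin).1 (b + i - n + n) := by
        rw [show b + i - n + n = 0 + (b + i) by omega, splice_coord_add, hp]
    _ = (G.splice z (b + i) p hjoin).1 (b + i - n) :=
        coord_add_eq_of_shift_iterate hz' (by omega)
    _ = z.1 (b + i - n) := splice_coord_of_lt (by omega)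
    _ = z.1 (b + i - n + n) :=
        (coord_add_eq_of_shift_iterate (h z fun _ _ => rfl) (by omega)).symm
    _ = z.1 (b + i) := congrArg z.1 (by omega)

lemma r_mem_Vset_of_cyl_periodic (hr : Surjective G.r) {n : ℕ} (hn : 0 < n) {y : G.InfPath}
    {P : ℕ → Set E} (hP : ∀ i, P i ∈ 𝓝 (y.1 i)) {l b : ℕ} (hb : l + n ≤ b)
    (h : ∀ z ∈ G.cyl P b, G.shift^[l + n] z = G.shift^[l] z) : G.r (y.1 b) ∈ G.Vset n hn := by
  refine ⟨interior _, isOpen_interior,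
    mem_interior_iff_mem_nhds.2 (G.image_cyl_mem_nhds hr y P b fun i _ => hP i), ?_⟩
  intro w hw
  obtain ⟨z, hz, rfl⟩ := interior_subset hw
  have hagree : ∀ z' : G.InfPath, (∀ i < b, z'.1 i = z.1 i) →
      G.shift^[l + n] z' = G.shift^[l] z' :=
    fun z' hz' => h z' fun i hi => hz' i hi ▸ hz i hi
  exact ⟨G.segment z b n, isCycle_segment hn (hagree z fun _ _ => rfl) (by omega),
    G.not_hasEntrance_segment hr hb hagree, rfl⟩

lemma exists_cyl_periodic (hr : Surjective G.r) {y : G.InfPath} {l n : ℕ}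
    (hy : G.shift^[l + n] y = G.shift^[l] y) {N : Set G.InfPath} (hN : N ∈ 𝓝 y)
    (hinj : ∀ z ∈ N, ∀ z' ∈ N, G.shift^[l + n] z = G.shift^[l] z' → z = z') :
    ∃ (P : ℕ → Set E) (b : ℕ), (∀ i, P i ∈ 𝓝 (y.1 i)) ∧
      ∀ z ∈ G.cyl P b, G.shift^[l + n] z = G.shift^[l] z := by
  obtain ⟨O, M, hO, hON⟩ := G.exists_cyl_subset_of_mem_nhds hN
  set A := (fun z : G.InfPath => G.r (z.1 (l + n))) '' G.cyl O (l + n)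
  have hA : A ∈ 𝓝 (G.r (y.1 l)) := by
    have := G.image_cyl_mem_nhds hr y O (l + n) fun i _ => hO i
    rwa [coord_add_eq_of_shift_iterate hy le_rfl] at this
  -- For `z ∈ cyl P b`, splicing a path of `cyl O (l + n)` onto `σ^l z` (possible as `r(z_l) ∈ A`)
  -- gives a path in `cyl O M ⊆ N`, which `hinj` identifies with `z`.
  refine ⟨fun j => O j ∩ {e | l ≤ j → e ∈ O (j + n)} ∩ {e | j = l → G.r e ∈ A}, M + l + 1,
    fun j => inter_mem (inter_mem (hO j) ?_) ?_, fun z hz => ?_⟩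
  · by_cases hj : l ≤ j
    · refine mem_of_superset ?_ fun e he _ => he
      rw [← coord_add_eq_of_shift_iterate hy hj]
      exact hO (j + n)
    · exact univ_mem' fun e hj' => absurd hj' hj
  · by_cases hj : j = l
    · subst hj
      exact mem_of_superset (G.r_cont.continuousAt.preimage_mem_nhds hA) fun e he _ => he
    · exact univ_mem' fun e hj' => absurd hj' hj
  obtain ⟨z₀, hz₀, hz₀z⟩ := (hz l (by omega)).2 rfl
  have hjoin : G.r (z₀.1 (l + n)) = G.r ((G.shift^[l] z).1 0) := by
    rw [shift_iterate_coord, zero_add]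
    exact hz₀z
  have hz'N : G.splice z₀ (l + n) (G.shift^[l] z) hjoin ∈ N := hON fun i hi => by
    by_cases hin : i < l + n
    · rw [splice_coord_of_lt hin]
      exact hz₀ i hin
    · obtain ⟨j, rfl⟩ : ∃ j, i = j + (l + n) := ⟨i - (l + n), by omega⟩
      rw [splice_coord_add, shift_iterate_coord, show j + (l + n) = j + l + n by omega]
      exact (hz (j + l) (by omega)).1.2 (by omega)
  have hzN : z ∈ N := hON fun i hi => (hz i (by omega)).1.1
  have hshift := shift_iterate_splice (h := hjoin)
  rwa [hinj _ hz'N z hzN hshift] at hshift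

end NoSingularVertices

section Groupoid

def basicSets : Set (Set G.Gamma) :=
  {S | ∃ (U W : Set G.InfPath) (k l : ℕ), IsOpen U ∧ IsOpen W ∧
    InjOn (G.shift^[k]) U ∧ InjOn (G.shift^[l]) W ∧ S = G.basicSet U W k l}

variable {G}

lemma isOpen_basicSet {U W : Set G.InfPath} {k l : ℕ} (hU : IsOpen U) (hW : IsOpen W)
    (hkU : InjOn (G.shift^[k]) U) (hlW : InjOn (G.shift^[l]) W) : IsOpen (G.basicSet U W k l) :=
  isOpen_generateFrom_of_mem ⟨U, W, k, l, hU, hW, hkU, hlW, rfl⟩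

lemma basicSet_mono {U U' W W' : Set G.InfPath} {k l : ℕ} (hU : U ⊆ U') (hW : W ⊆ W') :
    G.basicSet U W k l ⊆ G.basicSet U' W' k l :=
  fun _ ⟨hgU, hgW, hc, hs⟩ => ⟨hU hgU, hW hgW, hc, hs⟩

lemma basicSet_subset_add (U W : Set G.InfPath) (k l d : ℕ) :
    G.basicSet U W k l ⊆ G.basicSet U W (d + k) (d + l) :=
  fun _ ⟨hgU, hgW, hc, hs⟩ =>
    ⟨hgU, hgW, by push_cast; omega, by rw [iterate_add_apply, iterate_add_apply, hs]⟩

variable (G)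

lemma exists_basicSets_mem_subset (g : G.Gamma) {A B : Set G.InfPath} (hA : IsOpen A)
    (hB : IsOpen B) (hgA : g.1.1 ∈ A) (hgB : g.1.2.2 ∈ B) :
    ∃ T ∈ G.basicSets, g ∈ T ∧ T ⊆ {h | h.1.1 ∈ A ∧ h.1.2.2 ∈ B} := by
  obtain ⟨k, l, hc, hs⟩ := g.2
  obtain ⟨U, hU, hgU, hkU⟩ := G.exists_isOpen_injOn_shift_iterate g.1.1 k
  obtain ⟨W, hW, hgW, hlW⟩ := G.exists_isOpen_injOn_shift_iterate g.1.2.2 l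
  exact ⟨_, ⟨A ∩ U, B ∩ W, k, l, hA.inter hU, hB.inter hW, hkU.mono inter_subset_right,
    hlW.mono inter_subset_right, rfl⟩, ⟨⟨hgA, hgU⟩, ⟨hgB, hgW⟩, hc, hs⟩,
    fun _ hh => ⟨hh.1.1, hh.2.1.1⟩⟩

lemma isTopologicalBasis_basicSets : IsTopologicalBasis G.basicSets := by
  refine ⟨?_, sUnion_eq_univ_iff.2 fun g => ?_, rfl⟩
  · rintro _ ⟨U₁, W₁, k₁, l₁, hU₁, hW₁, hkU₁, hlW₁, rfl⟩
      _ ⟨U₂, W₂, k₂, l₂, hU₂, hW₂, hkU₂, hlW₂, rfl⟩ g hg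
    wlog hl : l₁ ≤ l₂ generalizing U₁ W₁ k₁ l₁ U₂ W₂ k₂ l₂
    · obtain ⟨T, hT, hgT, hTsub⟩ := this U₂ W₂ k₂ l₂ hU₂ hW₂ hkU₂ hlW₂ U₁ W₁ k₁ l₁ hU₁ hW₁ hkU₁
        hlW₁ hg.symm (le_of_not_ge hl)
      exact ⟨T, hT, hgT, hTsub.trans (inter_comm _ _).subset⟩
    have hk : l₂ - l₁ + k₁ = k₂ := by have := hg.1.2.2.1; have := hg.2.2.2.1; omega
    refine ⟨_, ⟨U₁ ∩ U₂, W₁ ∩ W₂, k₁, l₁, hU₁.inter hU₂, hW₁.inter hW₂,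
      hkU₁.mono inter_subset_left, hlW₁.mono inter_subset_left, rfl⟩,
      ⟨⟨hg.1.1, hg.2.1⟩, ⟨hg.1.2.1, hg.2.2.1⟩, hg.1.2.2⟩,
      subset_inter (basicSet_mono inter_subset_left inter_subset_left) ?_⟩
    calc G.basicSet (U₁ ∩ U₂) (W₁ ∩ W₂) k₁ l₁
        ⊆ G.basicSet U₂ W₂ k₁ l₁ := basicSet_mono inter_subset_right inter_subset_right
      _ ⊆ G.basicSet U₂ W₂ (l₂ - l₁ + k₁) (l₂ - l₁ + l₁) := basicSet_subset_add _ _ _ _ _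
      _ = G.basicSet U₂ W₂ k₂ l₂ := by rw [hk, Nat.sub_add_cancel hl]
  · obtain ⟨T, hT, hgT, -⟩ :=
      G.exists_basicSets_mem_subset g isOpen_univ isOpen_univ trivial trivial
    exact ⟨T, hT, hgT⟩

lemma continuous_ends : Continuous fun g : G.Gamma => (g.1.1, g.1.2.2) := by
  refine continuous_def.2 fun O hO => isOpen_iff_mem_nhds.2 fun g hg => ?_
  obtain ⟨A, B, hA, hB, hgA, hgB, hAB⟩ := isOpen_prod_iff.1 hO _ _ hg
  obtain ⟨T, hT, hgT, hTAB⟩ := G.exists_basicSets_mem_subset g hA hB hgA hgB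
  exact mem_of_superset ((isOpen_generateFrom_of_mem hT).mem_nhds hgT) fun _ hh => hAB (hTAB hh)

lemma isClosed_isoSet [T2Space E] : IsClosed G.isoSet :=
  isClosed_diagonal.preimage G.continuous_ends

variable {G}

def Gamma.inv (g : G.Gamma) : G.Gamma :=
  ⟨(g.1.2.2, -g.1.2.1, g.1.1), by
    obtain ⟨k, l, hc, hs⟩ := g.2
    exact ⟨l, k, by rw [hc]; ring, hs.symm⟩⟩

lemma Gamma.inv_inv (g : G.Gamma) : g.inv.inv = g :=
  Subtype.ext <| Prod.ext rfl <| Prod.ext (neg_neg _) rfl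

variable (G)

lemma continuous_inv : Continuous (Gamma.inv (G := G)) := by
  refine continuous_generateFrom_iff.2 ?_
  rintro _ ⟨U, W, k, l, hU, hW, hkU, hlW, rfl⟩
  convert isOpen_basicSet hW hU hlW hkU using 1
  ext g
  exact ⟨fun ⟨hy, hx, hc, hs⟩ => ⟨hx, hy, by simp only [Gamma.inv] at hc; omega, hs.symm⟩,
    fun ⟨hx, hy, hc, hs⟩ => ⟨hy, hx, show -g.1.2.1 = _ by omega, hs.symm⟩⟩

def invHomeomorph : G.Gamma ≃ₜ G.Gamma where
  toFun := Gamma.inv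
  invFun := Gamma.inv
  left_inv := Gamma.inv_inv
  right_inv := Gamma.inv_inv
  continuous_toFun := G.continuous_inv
  continuous_invFun := G.continuous_inv

lemma inv_mem_isoInterior_iff {g : G.Gamma} : g.inv ∈ G.isoInterior ↔ g ∈ G.isoInterior := by
  have hiso : G.invHomeomorph ⁻¹' G.isoSet = G.isoSet := ext fun _ => eq_comm
  show g ∈ G.invHomeomorph ⁻¹' interior G.isoSet ↔ _
  rw [Homeomorph.preimage_interior, hiso]
  rfl

end Groupoid

section IsotropyInterior

variable {G}

lemma mem_isoInterior_of_cocycle_eq_zero {g : G.Gamma} (hxy : g.1.1 = g.1.2.2)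
    (hc : g.1.2.1 = 0) : g ∈ G.isoInterior :=
  interior_maximal (t := G.basicSet univ univ 0 0) (fun _ hh => hh.2.2.2)
    (isOpen_basicSet isOpen_univ isOpen_univ injective_id.injOn injective_id.injOn)
    ⟨trivial, trivial, by simpa using hc, hxy⟩

lemma mem_isoInterior_of_r_mem_Vset {n : ℕ} (hn : 0 < n) {g : G.Gamma}
    (hxy : g.1.1 = g.1.2.2) (hc : g.1.2.1 = n) {l : ℕ}
    (hper : G.shift^[l + n] g.1.1 = G.shift^[l] g.1.1) (hV : G.r (g.1.1.1 l) ∈ G.Vset n hn) :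
    g ∈ G.isoInterior := by
  obtain ⟨W, hW, hxW, hcyc⟩ := hV
  obtain ⟨U₀, hU₀, hxU₀, hlU₀⟩ := G.exists_isOpen_injOn_shift_iterate g.1.1 l
  set U := U₀ ∩ (fun z : G.InfPath => G.r (z.1 l)) ⁻¹' W
  have hU : IsOpen U := hU₀.inter (hW.preimage (G.r_cont.comp (G.continuous_coord l)))
  have hperU : ∀ z ∈ U, G.shift^[l + n] z = G.shift^[l] z := by
    rintro z ⟨-, hz⟩
    obtain ⟨γ, hγ, hent, hγz⟩ := hcyc _ hz
    rw [add_comm, iterate_add_apply]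
    exact shift_iterate_eq_self_of_not_hasEntrance hγ hent
      (by rw [shift_iterate_coord, zero_add, hγz])
  have hlU : InjOn (G.shift^[l]) U := hlU₀.mono inter_subset_left
  have hxU : g.1.1 ∈ U := ⟨hxU₀, hxW⟩
  refine interior_maximal (t := G.basicSet U U (l + n) l)
    (fun h ⟨hx, hy, _, hs⟩ => hlU hx hy ((hperU _ hx).symm.trans hs))
    (isOpen_basicSet hU hU (hlU.congr fun z hz => (hperU z hz).symm) hlU)
    ⟨hxU, hxy ▸ hxU, by rw [hc]; push_cast; ring, hxy ▸ hper⟩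

lemma eventually_r_mem_Vset_of_mem_isoInterior (hr : Surjective G.r) {n : ℕ} (hn : 0 < n)
    {h : G.Gamma} (hh : h ∈ G.isoInterior) (hc : h.1.2.1 = n) :
    ∀ᶠ b in atTop, G.r (h.1.1.1 b) ∈ G.Vset n hn := by
  have hxy : h.1.1 = h.1.2.2 := interior_subset (s := G.isoSet) hh
  obtain ⟨_, ⟨U, W, k, l, hU, hW, -, -, rfl⟩, ⟨hxU, hyW, hkl, hs⟩, hiso⟩ :=
    G.isTopologicalBasis_basicSets.mem_nhds_iff.1 (mem_interior_iff_mem_nhds.1 hh)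
  obtain rfl : k = l + n := by omega
  rw [← hxy] at hyW hs
  have hinj : ∀ z ∈ U ∩ W, ∀ z' ∈ U ∩ W, G.shift^[l + n] z = G.shift^[l] z' → z = z' :=
    fun z hz z' hz' hzz' => hiso (a := ⟨(z, n, z'), l + n, l, by push_cast; ring, hzz'⟩)
      ⟨hz.1, hz'.2, by push_cast; ring, hzz'⟩
  obtain ⟨P, b₀, hP, hperP⟩ :=
    G.exists_cyl_periodic hr hs (inter_mem (hU.mem_nhds hxU) (hW.mem_nhds hyW)) hinj
  filter_upwards [eventually_ge_atTop (b₀ + l + n)] with b hb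
  exact G.r_mem_Vset_of_cyl_periodic hr hn hP (by omega)
    fun z hz => hperP z fun i hi => hz i (by omega)

lemma compl_isoInterior_mem_nhds_of_pos (hr : Surjective G.r)
    (hV : ∀ (n : ℕ) (hn : 0 < n), IsClosed (G.Vset n hn)) {g : G.Gamma}
    (hxy : g.1.1 = g.1.2.2) (hpos : 0 < g.1.2.1) (hg : g ∉ G.isoInterior) :
    G.isoInteriorᶜ ∈ 𝓝 g := by
  obtain ⟨k, l, hc, hs⟩ := g.2
  obtain ⟨n, rfl⟩ : ∃ n, k = l + n := ⟨k - l, by omega⟩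
  have hn : 0 < n := by omega
  have hper : G.shift^[l + n] g.1.1 = G.shift^[l] g.1.1 := hxy ▸ hs
  have hxV : G.r (g.1.1.1 l) ∉ G.Vset n hn := fun hxV =>
    hg (mem_isoInterior_of_r_mem_Vset hn hxy (by push_cast at hc; omega) hper hxV)
  obtain ⟨U, hU, hxU, hkU⟩ := G.exists_isOpen_injOn_shift_iterate g.1.1 (l + n)
  obtain ⟨W, hW, hyW, hlW⟩ := G.exists_isOpen_injOn_shift_iterate g.1.2.2 l
  have hUV : IsOpen (U ∩ (fun z : G.InfPath => G.r (z.1 l)) ⁻¹' (G.Vset n hn)ᶜ) :=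
    hU.inter ((hV n hn).isOpen_compl.preimage (G.r_cont.comp (G.continuous_coord l)))
  refine mem_of_superset ((isOpen_basicSet hUV hW (hkU.mono inter_subset_left) hlW).mem_nhds
    ⟨⟨hxU, hxV⟩, hyW, hc, hs⟩) ?_
  rintro h ⟨⟨-, hhV⟩, -, hhc, hhs⟩ hh
  have hhxy : h.1.1 = h.1.2.2 := interior_subset (s := G.isoSet) hh
  have hhper : G.shift^[l + n] h.1.1 = G.shift^[l] h.1.1 := hhxy ▸ hhs
  obtain ⟨N, hN⟩ := eventually_atTop.1
    (eventually_r_mem_Vset_of_mem_isoInterior hr hn hh (by push_cast at hhc; omega))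
  apply hhV
  show G.r (h.1.1.1 l) ∈ _
  rw [← coord_add_mul_eq_of_shift_iterate hhper le_rfl N]
  exact hN _ (le_add_left (Nat.le_mul_of_pos_left N hn))

end IsotropyInterior

end TopGraph

theorem stmt5_general {V E : Type} [TopologicalSpace V] [TopologicalSpace E]
    [T2Space V] [T2Space E]
    (G : TopGraph V E)
    (hsg : G.sg = ∅) (hV : ∀ (n : ℕ) (hn : 0 < n), IsClosed (G.Vset n hn)) :
    IsClosed G.isoInterior := by
  have hr := G.surjective_r hsg
  refine isOpen_compl_iff.1 (isOpen_iff_mem_nhds.2 fun g hg => ?_)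
  by_cases hxy : g.1.1 = g.1.2.2
  · rcases lt_trichotomy g.1.2.1 0 with hneg | hzero | hpos
    · have hinv := TopGraph.compl_isoInterior_mem_nhds_of_pos hr hV hxy.symm (neg_pos.2 hneg)
        (mt G.inv_mem_isoInterior_iff.1 hg)
      exact mem_of_superset (G.continuous_inv.continuousAt.preimage_mem_nhds hinv)
        fun h hh hh' => hh (G.inv_mem_isoInterior_iff.2 hh')
    · exact absurd (TopGraph.mem_isoInterior_of_cocycle_eq_zero hxy hzero) hg
    · exact TopGraph.compl_isoInterior_mem_nhds_of_pos hr hV hxy hpos hg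
  · exact mem_of_superset (G.isClosed_isoSet.isOpen_compl.mem_nhds hxy)
      (compl_subset_compl.2 interior_subset)

/-- Theorem 3.8, final claim: if every `V_n` is closed then `Iso(Γ(E^∞,σ))°` is closed. -/
theorem stmt5 {V E : Type} [TopologicalSpace V] [TopologicalSpace E]
    [T2Space V] [T2Space E] [LocallyCompactSpace V] [LocallyCompactSpace E]
    [SecondCountableTopology V] [SecondCountableTopology E]
    (G : TopGraph V E)
    (hsg : G.sg = ∅) (hV : ∀ (n : ℕ) (hn : 0 < n), IsClosed (G.Vset n hn)) :
    IsClosed G.isoInterior :=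
  stmt5_general G hsg hV
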